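/- Response model error for a myopic follower with linear rewards. Let θ*, θ̃ ∈ ℝ^d and suppose B_A > 0 satisfies ‖A_{Q_{θ*}}‖_∞ ≤ B_A and ‖A_{Q_{θ̃}}‖_∞ ≤ B_A. Set f(x) = η·x + C⁽³⁾·x² with C⁽³⁾ = (η²·exp(2ηB_A)/2)·(2 + ηB_A·exp(2ηB_A)). Then for every symmetric positive definite matrix Ψ ∈ ℝ^{d×d}, D_TV(ν_{θ*}, ν_{θ̃}) ≤ min{ f(√(tr(Ψ⁻¹·Σ_{θ̃}))·‖θ* − θ̃‖_Ψ), f(√(tr(Ψ⁻¹·Σ_{θ*}))·‖θ* − θ̃‖_Ψ) }. -/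

import Mathlib

open Finset

noncomputable section

namespace QSE4

variable {B : Type*} [Fintype B]

/-- Soft value `V(Q) = η⁻¹ log Σ_b exp(η Q b)`. -/
def softVal (η : ℝ) (Q : B → ℝ) : ℝ := η⁻¹ * Real.log (∑ b, Real.exp (η * Q b))

/-- Advantage `A_Q(b) = Q b − V(Q)`. -/
def adv (η : ℝ) (Q : B → ℝ) (b : B) : ℝ := Q b - softVal η Q

/-- Quantal response `ν_Q(b) = exp(η A_Q(b))`. -/
def qres (η : ℝ) (Q : B → ℝ) (b : B) : ℝ := Real.exp (η * adv η Q b)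

/-- Total-variation distance between (densities of) distributions on `B`. -/
def dTV (p q : B → ℝ) : ℝ := (1 / 2) * ∑ b, |p b - q b|

/-- Linear reward `Q_θ(b) = ⟨φ(b), θ⟩`. -/
def linQ {d : ℕ} (φ : B → Fin d → ℝ) (θ : Fin d → ℝ) (b : B) : ℝ := ∑ i, φ b i * θ i

/-- Mean feature `μ_θ = E_{ν_θ}[φ]`. -/
def meanFeat (η : ℝ) {d : ℕ} (φ : B → Fin d → ℝ) (θ : Fin d → ℝ) (i : Fin d) : ℝ :=
  ∑ b, qres η (linQ φ θ) b * φ b i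

/-- Covariance matrix `Σ_θ = Σ_b ν_θ(b)(φ(b) − μ_θ)(φ(b) − μ_θ)ᵀ`. -/
def covFeat (η : ℝ) {d : ℕ} (φ : B → Fin d → ℝ) (θ : Fin d → ℝ) :
    Matrix (Fin d) (Fin d) ℝ :=
  Matrix.of fun i j =>
    ∑ b, qres η (linQ φ θ) b *
      ((φ b i - meanFeat η φ θ i) * (φ b j - meanFeat η φ θ j))

/-- Weighted norm `‖v‖_Ψ = √(vᵀ Ψ v)`. -/
def psiNorm {d : ℕ} (Ψ : Matrix (Fin d) (Fin d) ℝ) (v : Fin d → ℝ) : ℝ :=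
  Real.sqrt (∑ i, ∑ j, v i * Ψ i j * v j)

open Real Matrix

/-!
Write `w = ν_{θ̃}` and `δ(b) = ⟨φ(b) - μ_{θ̃}, θ* - θ̃⟩`. Since `Q_{θ*} - Q_{θ̃} - δ` is constant,
`ν_{θ*}` is the tilt of `w` by `exp (η δ)`, renormalised, and a tilt by `g` moves at most
`2 E_w |g - 1|` of mass. Expanding `exp` to second order,
`D_TV ≤ η E_w |δ| + (η² / 2) e^{η max |δ|} E_w δ²`. As advantages differ from rewards by
constants, `δ` is also the centred difference of the two advantages, so `|δ| ≤ 4 B_A`; and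
Cauchy–Schwarz for the pair `Ψ⁻¹, Ψ` gives `E_w δ² ≤ tr(Ψ⁻¹ Σ_{θ̃}) ‖θ* - θ̃‖²_Ψ`. Finally
`e^{4ηB_A} ≤ e^{2ηB_A} (2 + ηB_A e^{2ηB_A})` because `e^y (2 - y) ≤ e`. Exchanging the roles of
`θ*` and `θ̃` gives the second bound.
-/

lemma exp_mul_one_sub_le_one (x : ℝ) : exp x * (1 - x) ≤ 1 := by
  rcases le_or_gt (1 - x) 0 with hx | hx
  · nlinarith [exp_pos x]
  · calc exp x * (1 - x) ≤ exp x * exp (-x) := by gcongr; exact one_sub_le_exp_neg x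
      _ = 1 := by rw [← exp_add, add_neg_cancel, exp_zero]

lemma exp_sub_one_sub_le_sq_mul_exp {x : ℝ} (hx : 0 ≤ x) : exp x - 1 - x ≤ x ^ 2 / 2 * exp x := by
  have hmono : Monotone fun t => t ^ 2 / 2 * exp t - (exp t - 1 - t) := by
    refine monotone_of_hasDerivAt_nonneg (f' := fun t => t ^ 2 / 2 * exp t + (1 - exp t * (1 - t)))
      (fun t => ?_) (fun t => ?_)
    · refine (((((hasDerivAt_id' t).pow 2).div_const 2).mul (hasDerivAt_exp t)).sub
        (((hasDerivAt_exp t).sub_const 1).sub (hasDerivAt_id' t))).congr_deriv ?_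
      norm_num; ring
    · have := exp_mul_one_sub_le_one t
      positivity
  simpa using hmono hx

lemma abs_exp_sub_one_le_abs_add (x : ℝ) : |exp x - 1| ≤ |x| + x ^ 2 / 2 * exp |x| := by
  rcases le_or_gt 0 x with hx | hx
  · rw [abs_of_nonneg hx, abs_of_nonneg (by linarith [add_one_le_exp x])]
    linarith [exp_sub_one_sub_le_sq_mul_exp hx]
  · rw [abs_of_neg hx, abs_of_nonpos (by linarith [exp_le_one_iff.2 hx.le])]
    nlinarith [add_one_le_exp x, exp_pos (-x)]

lemma exp_mul_two_sub_le_four (y : ℝ) : exp y * (2 - y) ≤ 4 := by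
  calc exp y * (2 - y) = exp 1 * (exp (y - 1) * (1 - (y - 1))) := by
        rw [← mul_assoc, ← exp_add]; ring_nf
    _ ≤ exp 1 * 1 := by gcongr; exact exp_mul_one_sub_le_one _
    _ ≤ 4 := by linarith [exp_one_lt_d9]

lemma exp_four_mul_le (a : ℝ) : exp (4 * a) ≤ exp (2 * a) * (2 + a * exp (2 * a)) := by
  have h := exp_mul_two_sub_le_four (2 * a)
  have he : exp (4 * a) = exp (2 * a) * exp (2 * a) := by rw [← exp_add]; ring_nf
  nlinarith [exp_pos (2 * a)]

section Tilt

variable {B : Type*} [Fintype B]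

lemma dTV_comm (p q : B → ℝ) : dTV p q = dTV q p := by
  simp only [dTV, abs_sub_comm]

lemma dTV_tilt_le {w g : B → ℝ} (hw : ∀ b, 0 ≤ w b) (hw1 : ∑ b, w b = 1) (hg : ∀ b, 0 ≤ g b)
    (hZ : 0 < ∑ b, w b * g b) :
    dTV (fun b => w b * g b / ∑ b', w b' * g b') w ≤ ∑ b, w b * |g b - 1| := by
  set Z := ∑ b, w b * g b
  -- reweighting by `g` moves mass `∑ w |g - 1|`, renormalising moves `|Z - 1|` more
  have hpoint : ∀ b, |w b * g b / Z - w b| ≤ w b * g b * |Z⁻¹ - 1| + w b * |g b - 1| := by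
    intro b
    calc |w b * g b / Z - w b| = |w b * g b * (Z⁻¹ - 1) + w b * (g b - 1)| := by ring_nf
      _ ≤ |w b * g b * (Z⁻¹ - 1)| + |w b * (g b - 1)| := abs_add_le _ _
      _ = _ := by simp only [abs_mul, abs_of_nonneg (hw b), abs_of_nonneg (hg b)]
  have hZ1 : Z * |Z⁻¹ - 1| = |∑ b, w b * (g b - 1)| := by
    rw [← abs_of_pos hZ, ← abs_mul, abs_of_pos hZ, mul_sub, mul_inv_cancel₀ hZ.ne', mul_one]
    simp only [mul_sub, mul_one, Finset.sum_sub_distrib, hw1, Z, abs_sub_comm]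
  have hmean : |∑ b, w b * (g b - 1)| ≤ ∑ b, w b * |g b - 1| :=
    (Finset.abs_sum_le_sum_abs _ _).trans_eq (by simp only [abs_mul, abs_of_nonneg (hw _)])
  calc dTV (fun b => w b * g b / Z) w
      ≤ 1 / 2 * ∑ b, (w b * g b * |Z⁻¹ - 1| + w b * |g b - 1|) := by
        unfold dTV; gcongr with b; exact hpoint b
    _ = 1 / 2 * (Z * |Z⁻¹ - 1| + ∑ b, w b * |g b - 1|) := by
        rw [Finset.sum_add_distrib, ← Finset.sum_mul]
    _ ≤ ∑ b, w b * |g b - 1| := by rw [hZ1]; linarith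

lemma abs_sub_sum_mul_le {w X : B → ℝ} {M : ℝ} (hw : ∀ b, 0 ≤ w b) (hw1 : ∑ b, w b = 1)
    (hX : ∀ b, |X b| ≤ M) (b : B) : |X b - ∑ b', w b' * X b'| ≤ 2 * M := by
  have hmean : |∑ b', w b' * X b'| ≤ M :=
    calc |∑ b', w b' * X b'| ≤ ∑ b', w b' * M :=
          (Finset.abs_sum_le_sum_abs _ _).trans (Finset.sum_le_sum fun b' _ => by
            rw [abs_mul, abs_of_nonneg (hw b')]; exact mul_le_mul_of_nonneg_left (hX b') (hw b'))
      _ = M := by rw [← Finset.sum_mul, hw1, one_mul]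
  linarith [abs_sub (X b) (∑ b', w b' * X b'), hX b]

lemma sum_mul_abs_le_sqrt {w δ : B → ℝ} (hw : ∀ b, 0 ≤ w b) (hw1 : ∑ b, w b = 1) :
    ∑ b, w b * |δ b| ≤ √(∑ b, w b * δ b ^ 2) := by
  refine Real.le_sqrt_of_sq_le ?_
  have h := Finset.sum_sq_le_sum_mul_sum_of_sq_le_mul Finset.univ (fun b _ => hw b)
    (fun b _ => mul_nonneg (hw b) (sq_nonneg (δ b))) (r := fun b => w b * |δ b|)
    (fun b _ => le_of_eq (by ring_nf; rw [sq_abs]))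
  rwa [hw1, one_mul] at h

lemma dTV_exp_tilt_le {w δ : B → ℝ} {η R : ℝ} (hη : 0 ≤ η) (hw : ∀ b, 0 ≤ w b)
    (hw1 : ∑ b, w b = 1) (hδ : ∀ b, |δ b| ≤ R) :
    dTV (fun b => w b * exp (η * δ b) / ∑ b', w b' * exp (η * δ b')) w ≤
      η * ∑ b, w b * |δ b| + η ^ 2 * exp (η * R) / 2 * ∑ b, w b * δ b ^ 2 := by
  have hηδ : ∀ b, |η * δ b| ≤ η * R := fun b => by
    rw [abs_mul, abs_of_nonneg hη]
    exact mul_le_mul_of_nonneg_left (hδ b) hη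
  have hZ : 0 < ∑ b, w b * exp (η * δ b) := by
    refine lt_of_lt_of_le (exp_pos (-(η * R))) ?_
    calc exp (-(η * R)) = ∑ b, w b * exp (-(η * R)) := by rw [← Finset.sum_mul, hw1, one_mul]
      _ ≤ _ := by
        gcongr with b
        · exact hw b
        · exact neg_le_of_abs_le (hηδ b)
  refine (dTV_tilt_le hw hw1 (fun b => (exp_pos _).le) hZ).trans ?_
  calc ∑ b, w b * |exp (η * δ b) - 1|
      ≤ ∑ b, w b * (η * |δ b| + η ^ 2 * exp (η * R) / 2 * δ b ^ 2) := by
        gcongr with b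
        · exact hw b
        · refine (abs_exp_sub_one_le_abs_add _).trans ?_
          have := exp_le_exp.2 (hηδ b)
          rw [abs_mul, abs_of_nonneg hη] at this ⊢
          have hsq : 0 ≤ η ^ 2 * δ b ^ 2 / 2 := by positivity
          linarith [mul_le_mul_of_nonneg_left this hsq]
    _ = _ := by
        simp only [mul_add, Finset.sum_add_distrib, Finset.mul_sum]
        congr 1 <;> refine Finset.sum_congr rfl fun b _ => by ring

end Tilt

section QuantalResponse

variable {B : Type*} [Fintype B] {η : ℝ}

lemma qres_pos (η : ℝ) (Q : B → ℝ) (b : B) : 0 < qres η Q b := exp_pos _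

variable [Nonempty B]

lemma qres_eq_exp_div (hη : η ≠ 0) (Q : B → ℝ) (b : B) :
    qres η Q b = exp (η * Q b) / ∑ b', exp (η * Q b') := by
  have hS : 0 < ∑ b', exp (η * Q b') := Finset.sum_pos (fun _ _ => exp_pos _) univ_nonempty
  rw [qres, adv, softVal, mul_sub, ← mul_assoc, mul_inv_cancel₀ hη, one_mul, exp_sub,
    exp_log hS]

lemma sum_qres (hη : η ≠ 0) (Q : B → ℝ) : ∑ b, qres η Q b = 1 := by
  simp only [qres_eq_exp_div hη, ← Finset.sum_div]
  exact div_self (Finset.sum_pos (fun _ _ => exp_pos _) univ_nonempty).ne'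

lemma qres_eq_tilt (hη : η ≠ 0) (Q Q' : B → ℝ) (c : ℝ) (b : B) :
    qres η Q' b = qres η Q b * exp (η * (Q' b - Q b - c)) /
      ∑ b', qres η Q b' * exp (η * (Q' b' - Q b' - c)) := by
  have htilt : ∀ b, qres η Q b * exp (η * (Q' b - Q b - c)) =
      exp (η * Q' b) * (exp (-(η * c)) / ∑ b', exp (η * Q b')) := by
    intro b
    rw [qres_eq_exp_div hη, div_mul_eq_mul_div, mul_div_assoc', ← exp_add, ← exp_add]
    ring_nf
  have hK : 0 < exp (-(η * c)) / ∑ b', exp (η * Q b') :=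
    div_pos (exp_pos _) (Finset.sum_pos (fun _ _ => exp_pos _) univ_nonempty)
  simp only [htilt, ← Finset.sum_mul]
  rw [mul_div_mul_right _ _ hK.ne', qres_eq_exp_div hη]

end QuantalResponse

section QuadraticForm

variable {n : Type*} [Fintype n]

lemma sq_dotProduct_mulVec_le {M : Matrix n n ℝ} (hM : M.PosSemidef) (x y : n → ℝ) :
    (x ⬝ᵥ (M *ᵥ y)) ^ 2 ≤ (x ⬝ᵥ (M *ᵥ x)) * (y ⬝ᵥ (M *ᵥ y)) := by
  let := M.toSeminormedAddCommGroup hM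
  let := M.toInnerProductSpace hM
  have h := real_inner_mul_inner_self_le x y
  change ((M *ᵥ y) ⬝ᵥ star x) * ((M *ᵥ y) ⬝ᵥ star x) ≤
    ((M *ᵥ x) ⬝ᵥ star x) * ((M *ᵥ y) ⬝ᵥ star y) at h
  simpa only [star_trivial, dotProduct_comm _ x, dotProduct_comm _ y, sq] using h

lemma sq_dotProduct_le_inv [DecidableEq n] {Ψ : Matrix n n ℝ} (hΨ : Ψ.PosDef) (u v : n → ℝ) :
    (u ⬝ᵥ v) ^ 2 ≤ (u ⬝ᵥ (Ψ⁻¹ *ᵥ u)) * (v ⬝ᵥ (Ψ *ᵥ v)) := by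
  have hinv : Ψ * Ψ⁻¹ = 1 := Ψ.mul_nonsing_inv (isUnit_iff_ne_zero.2 hΨ.det_pos.ne')
  have hΨu : Ψ *ᵥ (Ψ⁻¹ *ᵥ u) = u := by rw [mulVec_mulVec, hinv, one_mulVec]
  have hsymm : ∀ y, (Ψ⁻¹ *ᵥ u) ⬝ᵥ (Ψ *ᵥ y) = u ⬝ᵥ y := fun y => by
    rw [dotProduct_mulVec, ← mulVec_transpose, ← conjTranspose_eq_transpose_of_trivial,
      hΨ.isHermitian.eq, hΨu]
  have h := sq_dotProduct_mulVec_le hΨ.posSemidef (Ψ⁻¹ *ᵥ u) v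
  rwa [hsymm, hsymm] at h

lemma trace_mul_sum_smul_vecMulVec {ι : Type*} (s : Finset ι) (A : Matrix n n ℝ) (w : ι → ℝ)
    (u : ι → n → ℝ) :
    trace (A * ∑ i ∈ s, w i • vecMulVec (u i) (u i)) = ∑ i ∈ s, w i * (u i ⬝ᵥ (A *ᵥ u i)) := by
  simp only [Finset.mul_sum, Matrix.mul_smul, trace_sum, trace_smul, mul_vecMulVec,
    trace_vecMulVec, dotProduct_comm _ (u _), smul_eq_mul]

lemma sum_mul_sq_dotProduct_le [DecidableEq n] {ι : Type*} (s : Finset ι) {w : ι → ℝ}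
    (hw : ∀ i ∈ s, 0 ≤ w i) (u : ι → n → ℝ) {Ψ : Matrix n n ℝ} (hΨ : Ψ.PosDef) (v : n → ℝ) :
    ∑ i ∈ s, w i * (u i ⬝ᵥ v) ^ 2 ≤
      trace (Ψ⁻¹ * ∑ i ∈ s, w i • vecMulVec (u i) (u i)) * (v ⬝ᵥ (Ψ *ᵥ v)) := by
  rw [trace_mul_sum_smul_vecMulVec, Finset.sum_mul]
  refine Finset.sum_le_sum fun i hi => ?_
  rw [mul_assoc]
  exact mul_le_mul_of_nonneg_left (sq_dotProduct_le_inv hΨ (u i) v) (hw i hi)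

end QuadraticForm

lemma linQ_sub_linQ {B : Type*} {d : ℕ} (φ : B → Fin d → ℝ) (θ θ' : Fin d → ℝ) (b : B) :
    linQ φ θ b - linQ φ θ' b = φ b ⬝ᵥ (θ - θ') := by
  simp only [linQ, dotProduct, Pi.sub_apply, mul_sub, Finset.sum_sub_distrib]

section LinearRewards

variable {B : Type*} [Fintype B] {d : ℕ}

lemma sum_qres_mul_dotProduct (η : ℝ) (φ : B → Fin d → ℝ) (θ v : Fin d → ℝ) :
    ∑ b, qres η (linQ φ θ) b * (φ b ⬝ᵥ v) = meanFeat η φ θ ⬝ᵥ v := by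
  simp only [meanFeat, dotProduct, Finset.sum_mul, Finset.mul_sum, mul_assoc]
  exact Finset.sum_comm

lemma covFeat_eq_sum_smul_vecMulVec (η : ℝ) (φ : B → Fin d → ℝ) (θ : Fin d → ℝ) :
    covFeat η φ θ = ∑ b, qres η (linQ φ θ) b •
      vecMulVec (φ b - meanFeat η φ θ) (φ b - meanFeat η φ θ) := by
  ext i j
  simp only [covFeat, of_apply, Matrix.sum_apply, Matrix.smul_apply, vecMulVec_apply, Pi.sub_apply,
    smul_eq_mul]

lemma psiNorm_eq_sqrt (Ψ : Matrix (Fin d) (Fin d) ℝ) (v : Fin d → ℝ) :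
    psiNorm Ψ v = √(v ⬝ᵥ (Ψ *ᵥ v)) := by
  simp only [psiNorm, dotProduct, mulVec, Finset.mul_sum, mul_assoc]

lemma psiNorm_sub_comm (Ψ : Matrix (Fin d) (Fin d) ℝ) (v v' : Fin d → ℝ) :
    psiNorm Ψ (v - v') = psiNorm Ψ (v' - v) := by
  rw [psiNorm_eq_sqrt, psiNorm_eq_sqrt, ← neg_sub v', mulVec_neg, neg_dotProduct, dotProduct_neg,
    neg_neg]

end LinearRewards

/-- The reward gap `Q_θ - Q_{θ'}`, centred under `ν_{θ'}`. -/
def centredGap {B : Type*} [Fintype B] (η : ℝ) {d : ℕ} (φ : B → Fin d → ℝ) (θ θ' : Fin d → ℝ)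
    (b : B) : ℝ :=
  (φ b - meanFeat η φ θ') ⬝ᵥ (θ - θ')

section CentredGap

variable {B : Type*} [Fintype B] {η : ℝ} {d : ℕ} (φ : B → Fin d → ℝ) (θ θ' : Fin d → ℝ)

lemma sum_qres_mul_centredGap_sq_le {Ψ : Matrix (Fin d) (Fin d) ℝ} (hΨ : Ψ.PosDef) :
    ∑ b, qres η (linQ φ θ') b * centredGap η φ θ θ' b ^ 2 ≤
      (√(trace (Ψ⁻¹ * covFeat η φ θ')) * psiNorm Ψ (θ - θ')) ^ 2 := by
  have hP : 0 ≤ (θ - θ') ⬝ᵥ (Ψ *ᵥ (θ - θ')) := hΨ.posSemidef.dotProduct_mulVec_nonneg _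
  have h := sum_mul_sq_dotProduct_le univ (fun b _ => (qres_pos η (linQ φ θ') b).le)
    (fun b => φ b - meanFeat η φ θ') hΨ (θ - θ')
  rw [← covFeat_eq_sum_smul_vecMulVec] at h
  have hvar_nonneg := Finset.sum_nonneg fun b (_ : b ∈ univ) =>
    mul_nonneg (qres_pos η (linQ φ θ') b).le (sq_nonneg (centredGap η φ θ θ' b))
  rwa [psiNorm_eq_sqrt, ← Real.sqrt_mul' _ hP, Real.sq_sqrt (hvar_nonneg.trans h)]

variable [Nonempty B]

lemma qres_linQ_eq_tilt (hη : η ≠ 0) :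
    qres η (linQ φ θ) = fun b => qres η (linQ φ θ') b * exp (η * centredGap η φ θ θ' b) /
      ∑ b', qres η (linQ φ θ') b' * exp (η * centredGap η φ θ θ' b') := by
  have hgap : ∀ b, centredGap η φ θ θ' b =
      linQ φ θ b - linQ φ θ' b - meanFeat η φ θ' ⬝ᵥ (θ - θ') := fun b => by
    rw [linQ_sub_linQ, ← sub_dotProduct, centredGap]
  simp only [hgap]
  exact funext (qres_eq_tilt hη _ _ _)

lemma abs_centredGap_le (hη : η ≠ 0) {M : ℝ} (hA : ∀ b, |adv η (linQ φ θ) b| ≤ M)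
    (hA' : ∀ b, |adv η (linQ φ θ') b| ≤ M) (b : B) : |centredGap η φ θ θ' b| ≤ 4 * M := by
  set w := qres η (linQ φ θ')
  set X : B → ℝ := fun b => adv η (linQ φ θ) b - adv η (linQ φ θ') b
  have hX : ∀ b, X b = φ b ⬝ᵥ (θ - θ') - (softVal η (linQ φ θ) - softVal η (linQ φ θ')) :=
    fun b => by simp only [X, adv, ← linQ_sub_linQ]; ring
  have hmean : ∑ b, w b * (φ b ⬝ᵥ (θ - θ')) = meanFeat η φ θ' ⬝ᵥ (θ - θ') :=
    sum_qres_mul_dotProduct ..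
  have hcentred : centredGap η φ θ θ' b = X b - ∑ b', w b' * X b' := by
    simp only [hX, mul_sub, Finset.sum_sub_distrib, hmean, ← Finset.sum_mul, sum_qres hη,
      centredGap, sub_dotProduct, w]
    ring
  rw [hcentred, show 4 * M = 2 * (2 * M) by ring]
  exact abs_sub_sum_mul_le (fun b => (qres_pos η _ b).le) (sum_qres hη _)
    (fun b => (abs_sub _ _).trans (by linarith [hA b, hA' b])) b

end CentredGap

lemma dTV_qres_linQ_le {B : Type*} [Fintype B] [Nonempty B] {η : ℝ} (hη : 0 < η) {d : ℕ}
    (φ : B → Fin d → ℝ) (θ θ' : Fin d → ℝ) {M : ℝ} (hA : ∀ b, |adv η (linQ φ θ) b| ≤ M)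
    (hA' : ∀ b, |adv η (linQ φ θ') b| ≤ M) {Ψ : Matrix (Fin d) (Fin d) ℝ} (hΨ : Ψ.PosDef) :
    dTV (qres η (linQ φ θ)) (qres η (linQ φ θ')) ≤
      η * (√(trace (Ψ⁻¹ * covFeat η φ θ')) * psiNorm Ψ (θ - θ')) +
        η ^ 2 * exp (4 * η * M) / 2 *
          (√(trace (Ψ⁻¹ * covFeat η φ θ')) * psiNorm Ψ (θ - θ')) ^ 2 := by
  have hw : ∀ b, 0 ≤ qres η (linQ φ θ') b := fun b => (qres_pos η _ b).le
  have hw1 := sum_qres hη.ne' (linQ φ θ')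
  have hvar := sum_qres_mul_centredGap_sq_le (η := η) φ θ θ' hΨ
  have hmean : ∑ b, qres η (linQ φ θ') b * |centredGap η φ θ θ' b| ≤
      √(trace (Ψ⁻¹ * covFeat η φ θ')) * psiNorm Ψ (θ - θ') :=
    (sum_mul_abs_le_sqrt hw hw1).trans
    ((Real.sqrt_le_left (mul_nonneg (Real.sqrt_nonneg _) (Real.sqrt_nonneg _))).2 hvar)
  rw [qres_linQ_eq_tilt φ θ θ' hη.ne']
  refine (dTV_exp_tilt_le hη.le hw hw1 (abs_centredGap_le φ θ θ' hη.ne' hA hA')).trans ?_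
  rw [show η * (4 * M) = 4 * η * M by ring]
  gcongr

theorem response_model_error_linear_general
    {B : Type*} [Fintype B] [Nonempty B]
    (η : ℝ) (hη : 0 < η) (d : ℕ) (φ : B → Fin d → ℝ)
    (θs θt : Fin d → ℝ) (BA : ℝ)
    (hAs : ∀ b, |adv η (linQ φ θs) b| ≤ BA)
    (hAt : ∀ b, |adv η (linQ φ θt) b| ≤ BA)
    (Ψ : Matrix (Fin d) (Fin d) ℝ) (hΨ : Ψ.PosDef) :
    dTV (qres η (linQ φ θs)) (qres η (linQ φ θt)) ≤
      min
        (η * (Real.sqrt (Matrix.trace (Ψ⁻¹ * covFeat η φ θt)) *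
            psiNorm Ψ (θs - θt)) +
          (η ^ 2 * Real.exp (2 * η * BA) / 2) * (2 + η * BA * Real.exp (2 * η * BA)) *
            (Real.sqrt (Matrix.trace (Ψ⁻¹ * covFeat η φ θt)) *
              psiNorm Ψ (θs - θt)) ^ 2)
        (η * (Real.sqrt (Matrix.trace (Ψ⁻¹ * covFeat η φ θs)) *
            psiNorm Ψ (θs - θt)) +
          (η ^ 2 * Real.exp (2 * η * BA) / 2) * (2 + η * BA * Real.exp (2 * η * BA)) *
            (Real.sqrt (Matrix.trace (Ψ⁻¹ * covFeat η φ θs)) *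
              psiNorm Ψ (θs - θt)) ^ 2) := by
  have hC : η ^ 2 * Real.exp (4 * η * BA) / 2 ≤
      η ^ 2 * Real.exp (2 * η * BA) / 2 * (2 + η * BA * Real.exp (2 * η * BA)) := by
    have h := exp_four_mul_le (η * BA)
    rw [← mul_assoc, ← mul_assoc] at h
    linarith [mul_le_mul_of_nonneg_left h (by positivity : (0 : ℝ) ≤ η ^ 2 / 2)]
  refine le_min ?_ ?_
  · exact (dTV_qres_linQ_le hη φ θs θt hAs hAt hΨ).trans (by gcongr)
  · rw [dTV_comm, psiNorm_sub_comm]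
    exact (dTV_qres_linQ_le hη φ θt θs hAt hAs hΨ).trans (by gcongr)

/-- Response model error for a myopic follower with linear rewards: with
`f(x) = ηx + C⁽³⁾x²`, for every symmetric positive definite `Ψ`,
`D_TV(ν_{θ*}, ν_{θ̃}) ≤ min{f(√tr(Ψ⁻¹Σ_{θ̃})·‖θ*−θ̃‖_Ψ), f(√tr(Ψ⁻¹Σ_{θ*})·‖θ*−θ̃‖_Ψ)}`. -/
theorem response_model_error_linear
    {B : Type*} [Fintype B] [Nonempty B]
    (η : ℝ) (hη : 0 < η) (d : ℕ) (hd : 1 ≤ d) (φ : B → Fin d → ℝ)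
    (θs θt : Fin d → ℝ) (BA : ℝ) (hBA : 0 < BA)
    (hAs : ∀ b, |adv η (linQ φ θs) b| ≤ BA)
    (hAt : ∀ b, |adv η (linQ φ θt) b| ≤ BA)
    (Ψ : Matrix (Fin d) (Fin d) ℝ) (hΨ : Ψ.PosDef) :
    dTV (qres η (linQ φ θs)) (qres η (linQ φ θt)) ≤
      min
        (η * (Real.sqrt (Matrix.trace (Ψ⁻¹ * covFeat η φ θt)) *
            psiNorm Ψ (θs - θt)) +
          (η ^ 2 * Real.exp (2 * η * BA) / 2) * (2 + η * BA * Real.exp (2 * η * BA)) *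
            (Real.sqrt (Matrix.trace (Ψ⁻¹ * covFeat η φ θt)) *
              psiNorm Ψ (θs - θt)) ^ 2)
        (η * (Real.sqrt (Matrix.trace (Ψ⁻¹ * covFeat η φ θs)) *
            psiNorm Ψ (θs - θt)) +
          (η ^ 2 * Real.exp (2 * η * BA) / 2) * (2 + η * BA * Real.exp (2 * η * BA)) *
            (Real.sqrt (Matrix.trace (Ψ⁻¹ * covFeat η φ θs)) *
              psiNorm Ψ (θs - θt)) ^ 2) :=
  response_model_error_linear_general η hη d φ θs θt BA hAs hAt Ψ hΨ

end QSE4
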